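/- arXiv:2405.12011 — 3 statements merged into one kernel-verified Lean document; each statement's English description precedes it below -/
import Mathlib

section
/- Let q be a prime power and let T ⊂ PG(3,q) be the union of the two intersecting lines {x₂=x₃=0} and {x₁=x₃=0}. Then I₂(T) has dimension 5 with basis {X₁X₂, X₀X₃, X₁X₃, X₂X₃, X₃²}, and V(I₂(T)) = T; that is, the union of two intersecting lines is a maximal rank-5 configuration. -/
open MvPolynomial

noncomputable section

/-- `PG3 F` is the projective space `PG(3, F)`. -/
abbrev PG3 (F : Type*) [Field F] := Projectivization F (Fin 4 → F)

/-- `I2 F S` is the space of quadratic forms in `X₀,…,X₃` vanishing on `S ⊆ PG(3,F)`. -/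
def I2 (F : Type*) [Field F] (S : Set (PG3 F)) : Submodule F (MvPolynomial (Fin 4) F) :=
  homogeneousSubmodule (Fin 4) F 2 ⊓
    ⨅ p ∈ S, LinearMap.ker ((aeval p.rep : MvPolynomial (Fin 4) F →ₐ[F] F).toLinearMap)

/-- the rank of a configuration `S ⊆ PG(3,F)`: `10 − dim I₂(S)`. -/
def rk (F : Type*) [Field F] (S : Set (PG3 F)) : ℕ :=
  10 - Module.finrank F (I2 F S)

/-- `Vz F I` is the common zero locus in `PG(3,F)` of the set `I` of polynomials. -/
def Vz (F : Type*) [Field F] (I : Set (MvPolynomial (Fin 4) F)) : Set (PG3 F) :=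
  {p | ∀ f ∈ I, eval p.rep f = 0}

/-!
Every quadratic form is a combination of the ten monomials `XᵢXⱼ`. The five monomials
`X₁X₂, X₀X₃, X₁X₃, X₂X₃, X₃²` vanish on both lines, while a combination of the other five,
`X₀², X₁², X₂², X₀X₁, X₀X₂`, vanishing on the lines has zero coefficients: evaluate it at
`e₀, e₁, e₂, e₀ + e₁, e₀ + e₂`. Already `X₃²` and `X₁X₂` cut out the two lines.
-/

namespace Finsupp

theorem exists_eq_single_add_single_of_degree_eq_two {σ : Type*} {d : σ →₀ ℕ}
    (h : d.degree = 2) : ∃ i j, d = single i 1 + single j 1 := by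
  have hcard : Multiset.card (toMultiset d) = 2 := by
    rw [card_toMultiset, ← h, degree]
    rfl
  obtain ⟨i, j, hij⟩ := Multiset.card_eq_two.mp hcard
  classical
  refine ⟨i, j, ?_⟩
  rw [← toMultiset_toFinsupp d, hij, Multiset.insert_eq_cons, ← Multiset.singleton_add,
    Multiset.toFinsupp_add, Multiset.toFinsupp_singleton, Multiset.toFinsupp_singleton]

end Finsupp

namespace MvPolynomial

variable {σ R : Type*} [CommSemiring R]

theorem X_mul_X_eq_monomial (i j : σ) :
    (X i * X j : MvPolynomial σ R) = monomial (Finsupp.single i 1 + Finsupp.single j 1) 1 := by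
  simp only [X, monomial_mul, mul_one]

theorem IsHomogeneous.degree_eq {f : MvPolynomial σ R} {n : ℕ} (hf : f.IsHomogeneous n)
    {d : σ →₀ ℕ} (hd : d ∈ f.support) : d.degree = n :=
  not_not.mp (mt hf.coeff_eq_zero (mem_support_iff.mp hd))

theorem mem_span_X_mul_X_of_isHomogeneous_two {f : MvPolynomial σ R} (hf : f.IsHomogeneous 2) :
    f ∈ Submodule.span R (Set.range fun ij : σ × σ => X ij.1 * X ij.2) := by
  rw [f.as_sum]
  refine Submodule.sum_mem _ fun d hd => ?_
  obtain ⟨i, j, rfl⟩ := Finsupp.exists_eq_single_add_single_of_degree_eq_two (hf.degree_eq hd)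
  rw [← mul_one (coeff _ f), ← smul_eq_mul, ← smul_monomial, ← X_mul_X_eq_monomial]
  exact Submodule.smul_mem _ _ (Submodule.subset_span ⟨(i, j), rfl⟩)

theorem IsHomogeneous.eval_smul [Fintype σ] {f : MvPolynomial σ R} {n : ℕ}
    (hf : f.IsHomogeneous n) (c : R) (v : σ → R) :
    eval (c • v) f = c ^ n * eval v f := by
  simp only [eval_eq', Finset.mul_sum, Pi.smul_apply, smul_eq_mul, mul_pow,
    Finset.prod_mul_distrib, Finset.prod_pow_eq_pow_sum]
  refine Finset.sum_congr rfl fun d hd => ?_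
  rw [← Finsupp.degree_eq_sum, hf.degree_eq hd]
  ring

end MvPolynomial

namespace Projectivization

variable {K σ : Type*} [Field K] {v : σ → K}

theorem eval_mk_rep_eq_zero_iff [Fintype σ] {f : MvPolynomial σ K} {n : ℕ}
    (hf : f.IsHomogeneous n) (hv : v ≠ 0) :
    MvPolynomial.eval (mk K v hv).rep f = 0 ↔ MvPolynomial.eval v f = 0 := by
  obtain ⟨a, ha⟩ := exists_smul_eq_mk_rep K v hv
  rw [← ha, Units.smul_def, hf.eval_smul, mul_eq_zero_iff_left (pow_ne_zero _ a.ne_zero)]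

theorem mk_rep_apply_eq_zero_iff (hv : v ≠ 0) (i : σ) : (mk K v hv).rep i = 0 ↔ v i = 0 := by
  obtain ⟨a, ha⟩ := exists_smul_eq_mk_rep K v hv
  rw [← ha, Pi.smul_apply, Units.smul_def, smul_eq_mul, mul_eq_zero_iff_left a.ne_zero]

end Projectivization

section TwoLines

variable {F : Type*} [Field F]

theorem mem_I2_iff {S : Set (PG3 F)} {f : MvPolynomial (Fin 4) F} :
    f ∈ I2 F S ↔ f.IsHomogeneous 2 ∧ ∀ p ∈ S, eval p.rep f = 0 := by
  simp [I2, Submodule.mem_inf, Submodule.mem_iInf]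

theorem subset_Vz_I2 (S : Set (PG3 F)) : S ⊆ Vz F (I2 F S) :=
  fun p hp _ hf => (mem_I2_iff.mp hf).2 p hp

variable (F) in
def twoLines : Set (PG3 F) :=
  {p | p.rep 2 = 0 ∧ p.rep 3 = 0} ∪ {p | p.rep 1 = 0 ∧ p.rep 3 = 0}

variable (F) in
def twoLinesQuadrics : Set (MvPolynomial (Fin 4) F) :=
  {X 1 * X 2, X 0 * X 3, X 1 * X 3, X 2 * X 3, X 3 * X 3}

def otherQuadraticMonomials : Fin 5 → MvPolynomial (Fin 4) F :=
  ![X 0 * X 0, X 1 * X 1, X 2 * X 2, X 0 * X 1, X 0 * X 2]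

theorem X_mul_X_mem_I2_twoLines {i j : Fin 4}
    (hij : ∀ p ∈ twoLines F, p.rep i * p.rep j = 0) : X i * X j ∈ I2 F (twoLines F) :=
  mem_I2_iff.mpr ⟨(isHomogeneous_X F i).mul (isHomogeneous_X F j), by simpa using hij⟩

theorem span_twoLinesQuadrics_le_I2 :
    Submodule.span F (twoLinesQuadrics F) ≤ I2 F (twoLines F) := by
  rw [Submodule.span_le]
  rintro g (rfl | rfl | rfl | rfl | rfl) <;>
    exact X_mul_X_mem_I2_twoLines fun p hp => by
      rcases hp with ⟨ha, hb⟩ | ⟨ha, hb⟩ <;> simp [ha, hb]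

theorem eval_eq_zero_of_mem_I2_twoLines {f : MvPolynomial (Fin 4) F}
    (hf : f ∈ I2 F (twoLines F)) {v : Fin 4 → F} (hv : v ≠ 0)
    (hvT : (v 2 = 0 ∧ v 3 = 0) ∨ (v 1 = 0 ∧ v 3 = 0)) : eval v f = 0 := by
  rw [mem_I2_iff] at hf
  rw [← Projectivization.eval_mk_rep_eq_zero_iff hf.1 hv]
  refine hf.2 _ ?_
  simpa only [twoLines, Set.mem_union, Set.mem_ofPred_eq,
    Projectivization.mk_rep_apply_eq_zero_iff] using hvT

theorem span_X_mul_X_le_sup :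
    Submodule.span F (Set.range fun ij : Fin 4 × Fin 4 => X ij.1 * X ij.2) ≤
      Submodule.span F (twoLinesQuadrics F) ⊔
        Submodule.span F (Set.range otherQuadraticMonomials) := by
  rw [Submodule.span_le]
  rintro _ ⟨⟨i, j⟩, rfl⟩
  fin_cases i <;> fin_cases j <;>
    first
    | (refine Submodule.mem_sup_left (Submodule.subset_span ?_)
       simp [twoLinesQuadrics, mul_comm (X (3 : Fin 4)), mul_comm (X (2 : Fin 4)) (X 1)]
       done)
    | (refine Submodule.mem_sup_right (Submodule.subset_span ?_)
       simp [otherQuadraticMonomials, mul_comm (X (1 : Fin 4)) (X 0),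
         mul_comm (X (2 : Fin 4)) (X 0)])

theorem eq_zero_of_mem_I2_twoLines_of_mem_span_other {w : MvPolynomial (Fin 4) F}
    (hw : w ∈ I2 F (twoLines F)) (hw' : w ∈ Submodule.span F (Set.range otherQuadraticMonomials)) :
    w = 0 := by
  obtain ⟨c, rfl⟩ := (Submodule.mem_span_range_iff_exists_fun F).mp hw'
  have hvanish (v : Fin 4 → F) (k : Fin 4) (hk : v k = 1)
      (hvT : (v 2 = 0 ∧ v 3 = 0) ∨ (v 1 = 0 ∧ v 3 = 0)) :
      ∑ i, c i * eval v (otherQuadraticMonomials i) = 0 := by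
    simpa using eval_eq_zero_of_mem_I2_twoLines hw (fun h => by simp [h] at hk) hvT
  have h0 := hvanish ![1, 0, 0, 0] 0 rfl (by simp)
  have h1 := hvanish ![0, 1, 0, 0] 1 rfl (by simp)
  have h2 := hvanish ![0, 0, 1, 0] 2 rfl (by simp)
  have h01 := hvanish ![1, 1, 0, 0] 0 rfl (by simp)
  have h02 := hvanish ![1, 0, 1, 0] 0 rfl (by simp)
  simp only [otherQuadraticMonomials, Fin.sum_univ_five, Matrix.cons_val_zero, Matrix.cons_val_one,
    Matrix.cons_val, map_mul, eval_X, mul_one, mul_zero, add_zero, zero_add] at h0 h1 h2 h01 h02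
  obtain ⟨h3, h4⟩ : c 3 = 0 ∧ c 4 = 0 := by simpa [h0, h1, h2] using And.intro h01 h02
  have hc : c = 0 := by
    funext i
    fin_cases i <;> assumption
  simp [hc]

theorem I2_twoLines_eq_span : I2 F (twoLines F) = Submodule.span F (twoLinesQuadrics F) := by
  refine le_antisymm (fun f hf => ?_) span_twoLinesQuadrics_le_I2
  obtain ⟨q, hq, w, hw, rfl⟩ := Submodule.mem_sup.mp
    (span_X_mul_X_le_sup (mem_span_X_mul_X_of_isHomogeneous_two (mem_I2_iff.mp hf).1))
  have hw0 : w = 0 := eq_zero_of_mem_I2_twoLines_of_mem_span_other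
    (by simpa using sub_mem hf (span_twoLinesQuadrics_le_I2 hq)) hw
  simpa [hw0] using hq

theorem finrank_span_twoLinesQuadrics :
    Module.finrank F (Submodule.span F (twoLinesQuadrics F)) = 5 := by
  let e : Fin 5 → Fin 4 →₀ ℕ := ![Finsupp.single 1 1 + Finsupp.single 2 1,
    Finsupp.single 0 1 + Finsupp.single 3 1, Finsupp.single 1 1 + Finsupp.single 3 1,
    Finsupp.single 2 1 + Finsupp.single 3 1, Finsupp.single 3 1 + Finsupp.single 3 1]
  have he : Function.Injective e := by
    intro a b h
    fin_cases a <;> fin_cases b <;> simp [e, DFunLike.ext_iff, Fin.forall_fin_succ] at h ⊢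
  have hfamily : basisMonomials (Fin 4) F ∘ e =
      ![X 1 * X 2, X 0 * X 3, X 1 * X 3, X 2 * X 3, X 3 * X 3] := by
    funext i
    fin_cases i <;> simp [e, X_mul_X_eq_monomial]
  have := finrank_span_eq_card ((basisMonomials (Fin 4) F).linearIndependent.comp e he)
  rwa [hfamily, Fintype.card_fin, Matrix.range_cons, Matrix.range_cons, Matrix.range_cons,
    Matrix.range_cons, Matrix.range_cons, Matrix.range_empty, Set.union_empty] at this

theorem Vz_I2_twoLines : Vz F (I2 F (twoLines F)) = twoLines F := by
  refine Set.Subset.antisymm (fun p hp => ?_) (subset_Vz_I2 _)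
  have hmem : ∀ i j : Fin 4, X i * X j ∈ twoLinesQuadrics F → eval p.rep (X i * X j) = 0 :=
    fun i j h => hp _ (by rw [I2_twoLines_eq_span]; exact Submodule.subset_span h)
  have h33 := hmem 3 3 (by simp [twoLinesQuadrics])
  have h12 := hmem 1 2 (by simp [twoLinesQuadrics])
  simp only [map_mul, eval_X, mul_self_eq_zero] at h33 h12
  rcases mul_eq_zero.mp h12 with h | h
  · exact Or.inr ⟨h, h33⟩
  · exact Or.inl ⟨h, h33⟩

end TwoLines

theorem stmt5_general (F : Type*) [Field F]
    (T : Set (PG3 F))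
    (hT : T = {p : PG3 F | p.rep 2 = 0 ∧ p.rep 3 = 0} ∪
              {p : PG3 F | p.rep 1 = 0 ∧ p.rep 3 = 0}) :
    I2 F T = Submodule.span F {X 1 * X 2, X 0 * X 3, X 1 * X 3, X 2 * X 3, X 3 * X 3} ∧
    Module.finrank F (I2 F T) = 5 ∧
    Vz F (I2 F T) = T ∧
    rk F T = 5 := by
  obtain rfl : T = twoLines F := hT
  have hfinrank : Module.finrank F (I2 F (twoLines F)) = 5 := by
    rw [I2_twoLines_eq_span, finrank_span_twoLinesQuadrics]
  exact ⟨I2_twoLines_eq_span, hfinrank, Vz_I2_twoLines, by rw [rk, hfinrank]⟩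

theorem stmt5 (F : Type*) [Field F] [Fintype F]
    (T : Set (PG3 F))
    (hT : T = {p : PG3 F | p.rep 2 = 0 ∧ p.rep 3 = 0} ∪
              {p : PG3 F | p.rep 1 = 0 ∧ p.rep 3 = 0}) :
    I2 F T = Submodule.span F {X 1 * X 2, X 0 * X 3, X 1 * X 3, X 2 * X 3, X 3 * X 3} ∧
    Module.finrank F (I2 F T) = 5 ∧
    Vz F (I2 F T) = T ∧
    rk F T = 5 :=
  stmt5_general F T hT
end
end

section
/- The number of unordered 4-element subsets of points of PG(3,q) that lie in a common plane and are in general position in that plane (no three collinear) equals q³(q⁴−1)(q³−1)(q+1)/24. -/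
noncomputable section

/-- A set of points of `PG(3,F)` is coplanar if it lies in the projective plane
corresponding to some 3-dimensional linear subspace. -/
def Coplanar' (F : Type*) [Field F] (s : Finset (PG3 F)) : Prop :=
  ∃ W : Submodule F (Fin 4 → F), Module.finrank F W = 3 ∧ ∀ p ∈ s, p.rep ∈ W

/-- A set of points of `PG(3,F)` is collinear if it lies in the projective line
corresponding to some 2-dimensional linear subspace. -/
def Collinear' (F : Type*) [Field F] (t : Finset (PG3 F)) : Prop :=
  ∃ W : Submodule F (Fin 4 → F), Module.finrank F W = 2 ∧ ∀ p ∈ t, p.rep ∈ W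

/-!
A quadrangle of `PG(3, q)` is the same thing as a circuit of four points: they are dependent but
any three of them are independent. Lifting to vectors, an ordered circuit `v₀, …, v₃` amounts to
an independent triple `v₁, v₂, v₃` together with the coefficients, all nonzero, of
`v₀ = c₁ v₁ + c₂ v₂ + c₃ v₃`; so there are `(q⁴ - 1)(q⁴ - q)(q⁴ - q²)(q - 1)³` of them. Dividing by
`(q - 1)⁴` for the choice of representatives and by `4!` for the ordering gives the count.
-/

open Finset Function Module Submodule Projectivization
open scoped LinearAlgebra.Projectivization Nat

theorem Fin.removeNth_succ_cons {α : Type*} {n : ℕ} (x : α) (w : Fin (n + 1) → α)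
    (j : Fin (n + 1)) :
    j.succ.removeNth (Fin.cons x w : Fin (n + 2) → α) = Fin.cons x (j.removeNth w) :=
  Fin.cons_comp_succ_succAbove x w j

theorem Finset.image_removeNth {α : Type*} [DecidableEq α] {n : ℕ} {f : Fin (n + 1) → α}
    (hf : Injective f) (i : Fin (n + 1)) :
    univ.image (i.removeNth f) = (univ.image f).erase (f i) := by
  rw [← image_erase hf, ← compl_singleton, ← Fin.image_succAbove_univ, image_image]
  rfl

theorem Finset.card_embedding_map_eq {α : Type*} {k : ℕ} {s : Finset α} (hs : s.card = k) :
    Nat.card {f : Fin k ↪ α // univ.map f = s} = k ! := by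
  classical
  let e : {f : Fin k ↪ α // univ.map f = s} ≃ (Fin k ≃ s) :=
    { toFun := fun f => Equiv.ofBijective
        (fun i => ⟨f.1 i, f.2.subst (motive := (f.1 i ∈ ·)) (mem_map_of_mem _ (mem_univ i))⟩)
        ((Fintype.bijective_iff_injective_and_card _).2
          ⟨fun i j h => f.1.injective (congrArg Subtype.val h), by simp [hs]⟩)
      invFun := fun e => ⟨e.toEmbedding.trans (Embedding.subtype _), by
        ext x
        simp only [mem_map, mem_univ, true_and]
        exact ⟨fun ⟨i, hi⟩ => hi ▸ (e i).2, fun hx => ⟨e.symm ⟨x, hx⟩, by simp⟩⟩⟩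
      left_inv := fun _ => rfl
      right_inv := fun _ => Equiv.ext fun _ => rfl }
  rw [Nat.card_congr e, Nat.card_eq_fintype_card,
    Fintype.card_equiv (Fintype.equivFinOfCardEq (by simp [hs])).symm, Fintype.card_fin]

theorem card_finEmbedding_map_eq_factorial_mul {α : Type*} [Finite α] (P : Finset α → Prop)
    {k : ℕ} (hP : ∀ s, P s → s.card = k) :
    Nat.card {f : Fin k ↪ α // P (univ.map f)} = k ! * Nat.card {s // P s} := by
  have : Fintype {s // P s} := Fintype.ofFinite _
  rw [← Nat.card_congr (Equiv.sigmaSubtypeFiberEquivSubtype (fun f : Fin k ↪ α => univ.map f)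
    (fun _ => Iff.rfl)), Nat.card_sigma]
  simp only [fun s : {s // P s} => card_embedding_map_eq (hP s s.2), sum_const, card_univ,
    smul_eq_mul, Nat.card_eq_fintype_card, mul_comm]

section LinearAlgebra

variable {K V : Type*} [Field K] [AddCommGroup V] [Module K V]

theorem Submodule.exists_le_finrank_eq [FiniteDimensional K V] (U : Submodule K V) {k : ℕ}
    (hU : finrank K U ≤ k) (hk : k ≤ finrank K V) : ∃ W, U ≤ W ∧ finrank K W = k := by
  induction k, hU using Nat.le_induction with
  | base => exact ⟨U, le_rfl, rfl⟩
  | succ k _ ih =>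
    obtain ⟨W, hUW, hW⟩ := ih (by omega)
    obtain ⟨x, -, hx⟩ := SetLike.exists_of_lt
      (lt_top_of_finrank_lt_finrank (by omega : finrank K W < finrank K V))
    exact ⟨W ⊔ K ∙ x, hUW.trans le_sup_left, by rw [finrank_sup_span_singleton hx, hW]⟩

theorem linearIndependent_cons_sum_removeNth_iff {n : ℕ} {w : Fin (n + 1) → V}
    (hw : LinearIndependent K w) (c : Fin (n + 1) → K) (j : Fin (n + 1)) :
    LinearIndependent K (Fin.cons (∑ i, c i • w i) (j.removeNth w) : Fin (n + 1) → V) ↔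
      c j ≠ 0 := by
  set S := span K (Set.range (j.removeNth w))
  have hrest : ∑ i, c (j.succAbove i) • w (j.succAbove i) ∈ S :=
    sum_mem fun i _ => smul_mem _ _ (subset_span ⟨i, rfl⟩)
  have hwj : w j ∉ S := by
    have hrange : w '' {j}ᶜ = Set.range (j.removeNth w) := by
      rw [← Fin.range_succAbove, ← Set.range_comp]
      rfl
    simpa only [hrange] using hw.notMem_span_image (s := {j}ᶜ) (by simp)
  have hrem : LinearIndependent K (j.removeNth w) := hw.comp _ Fin.succAbove_right_injective
  rw [linearIndependent_finCons, Fin.sum_univ_succAbove _ j, S.add_mem_iff_left hrest]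
  by_cases hc : c j = 0
  · simp [hc, S.zero_mem]
  · simp [hc, S.smul_mem_iff hc, hwj, hrem]

variable (K) in
def IsLinearCircuit {n : ℕ} (v : Fin (n + 1) → V) : Prop :=
  ¬ LinearIndependent K v ∧ ∀ i : Fin (n + 1), LinearIndependent K (i.removeNth v)

theorem IsLinearCircuit.ne_zero {n : ℕ} {v : Fin (n + 2) → V} (hv : IsLinearCircuit K v)
    (i : Fin (n + 2)) : v i ≠ 0 := by
  obtain ⟨j, hji⟩ := exists_ne i
  obtain ⟨z, rfl⟩ := Fin.exists_succAbove_eq hji.symm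
  exact (hv.2 j).ne_zero z

theorem isLinearCircuit_cons_sum_iff {n : ℕ} {w : Fin (n + 1) → V}
    (hw : LinearIndependent K w) (c : Fin (n + 1) → K) :
    IsLinearCircuit K (Fin.cons (∑ i, c i • w i) w : Fin (n + 2) → V) ↔ ∀ j, c j ≠ 0 := by
  have hdep : ¬ LinearIndependent K (Fin.cons (∑ i, c i • w i) w : Fin (n + 2) → V) := by
    rw [linearIndependent_finCons]
    exact fun h => h.2 (sum_mem fun i _ => smul_mem _ _ (subset_span ⟨i, rfl⟩))
  simp only [IsLinearCircuit, hdep, not_false_eq_true, true_and, Fin.forall_fin_succ,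
    Fin.removeNth_zero, Fin.tail_cons, hw, Fin.removeNth_succ_cons,
    linearIndependent_cons_sum_removeNth_iff hw]

theorem IsLinearCircuit.exists_cons_sum {n : ℕ} {v : Fin (n + 2) → V}
    (hv : IsLinearCircuit K v) :
    LinearIndependent K (Fin.tail v) ∧ ∃ c : Fin (n + 1) → K, ∑ i, c i • Fin.tail v i = v 0 := by
  have hw : LinearIndependent K (Fin.tail v) := by simpa using hv.2 0
  refine ⟨hw, (mem_span_range_iff_exists_fun K).1 ?_⟩
  by_contra hnot
  exact hv.1 (by rw [← Fin.cons_self_tail v, linearIndependent_finCons]; exact ⟨hw, hnot⟩)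

def linearCircuitEquiv (n : ℕ) :
    {w : Fin (n + 1) → V // LinearIndependent K w} × (Fin (n + 1) → Kˣ) ≃
      {v : Fin (n + 2) → V // IsLinearCircuit K v} :=
  Equiv.ofBijective
    (fun wc => ⟨Fin.cons (∑ i, (wc.2 i : K) • wc.1.1 i) wc.1.1,
      (isLinearCircuit_cons_sum_iff wc.1.2 _).2 fun j => (wc.2 j).ne_zero⟩)
    ⟨by
      rintro ⟨⟨w, hw⟩, c⟩ ⟨⟨w', hw'⟩, c'⟩ h
      obtain ⟨hsum, rfl⟩ := Fin.cons_inj.1 (Subtype.mk.inj h)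
      have hc : (fun i => (c i : K)) = fun i => (c' i : K) :=
        linearIndependent_iff_injective_fintypeLinearCombination.1 hw
          (by simpa [Fintype.linearCombination_apply] using hsum)
      simp only [Prod.mk.injEq, true_and]
      exact funext fun i => Units.ext (congrFun hc i),
    by
      rintro ⟨v, hv⟩
      obtain ⟨hw, c, hc⟩ := hv.exists_cons_sum
      have hcirc := hv
      rw [← Fin.cons_self_tail v, ← hc, isLinearCircuit_cons_sum_iff hw] at hcirc
      exact ⟨(⟨Fin.tail v, hw⟩, fun i => Units.mk0 (c i) (hcirc i)),
        Subtype.ext (by simp [hc, Fin.cons_self_tail])⟩⟩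

theorem card_isLinearCircuit [Fintype K] [Finite V] {n : ℕ} (hn : n + 1 ≤ finrank K V) :
    Nat.card {v : Fin (n + 2) → V // IsLinearCircuit K v} =
      (∏ i : Fin (n + 1), (Fintype.card K ^ finrank K V - Fintype.card K ^ (i : ℕ))) *
        (Fintype.card K - 1) ^ (n + 1) := by
  rw [← Nat.card_congr (linearCircuitEquiv n), Nat.card_prod, card_linearIndependent hn,
    Nat.card_fun, Nat.card_units, Nat.card_eq_fintype_card, Nat.card_fin]

namespace Projectivization

def IsCircuit {n : ℕ} (f : Fin (n + 1) → ℙ K V) : Prop :=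
  Dependent f ∧ ∀ i : Fin (n + 1), Independent (i.removeNth f)

theorem IsCircuit.injective {n : ℕ} {f : Fin (n + 3) → ℙ K V} (hf : IsCircuit f) :
    Injective f := by
  intro i j hij
  by_contra hne
  obtain ⟨k, hk⟩ : ({i, j}ᶜ : Finset (Fin (n + 3))).Nonempty := by
    rw [← card_pos, card_compl, Fintype.card_fin]
    have := card_le_two (a := i) (b := j)
    omega
  simp only [mem_compl, mem_insert, mem_singleton, not_or] at hk
  obtain ⟨i', rfl⟩ := Fin.exists_succAbove_eq (Ne.symm hk.1)
  obtain ⟨j', rfl⟩ := Fin.exists_succAbove_eq (Ne.symm hk.2)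
  have hinj := (independent_iff.1 (hf.2 k)).injective
  exact hne (congrArg _ (hinj (congrArg Projectivization.rep hij)))

theorem independent_mk_iff {ι : Type*} {v : ι → V} (hv : ∀ i, v i ≠ 0) :
    Independent (fun i => mk K (v i) (hv i)) ↔ LinearIndependent K v := by
  choose a ha using fun i => exists_smul_eq_mk_rep K (v i) (hv i)
  have hrep : Projectivization.rep ∘ (fun i => mk K (v i) (hv i)) = a • v :=
    funext fun i => (ha i).symm
  rw [independent_iff, hrep, LinearIndependent.units_smul_iff]

theorem isCircuit_mk_iff {n : ℕ} {v : Fin (n + 1) → V} (hv : ∀ i, v i ≠ 0) :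
    IsCircuit (fun i => mk K (v i) (hv i)) ↔ IsLinearCircuit K v := by
  rw [IsCircuit, IsLinearCircuit, dependent_iff_not_independent]
  exact and_congr (not_congr (independent_mk_iff hv))
    (forall_congr' fun i => independent_mk_iff fun j => hv (i.succAbove j))

theorem card_subtype_comp_mk {ι : Type*} [Fintype ι] [Finite K] (P : (ι → ℙ K V) → Prop) :
    Nat.card {v : ι → {v : V // v ≠ 0} // P fun i => mk K (v i).1 (v i).2} =
      Nat.card {f // P f} * (Nat.card K - 1) ^ Fintype.card ι := by
  let e : (ι → {v : V // v ≠ 0}) ≃ (ι → ℙ K V) × (ι → Kˣ) :=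
    (Equiv.arrowCongr (Equiv.refl ι) (nonZeroEquivProjectivizationProdUnits K V)).trans
      (Equiv.arrowProdEquivProdArrow _ _ _)
  have e' : {v : ι → {v : V // v ≠ 0} // P fun i => mk K (v i).1 (v i).2} ≃
      {f // P f} × (ι → Kˣ) :=
    (e.subtypeEquiv (q := fun x => P x.1) fun _ => Iff.rfl).trans
      Equiv.prodSubtypeFstEquivSubtypeProd
  rw [Nat.card_congr e', Nat.card_prod, Nat.card_fun, Nat.card_units,
    Nat.card_eq_fintype_card (α := ι)]

theorem card_isCircuit_mul [Fintype K] [Finite V] {n : ℕ} (hn : n + 1 ≤ finrank K V) :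
    Nat.card {f : Fin (n + 2) → ℙ K V // IsCircuit f} * (Fintype.card K - 1) =
      ∏ i : Fin (n + 1), (Fintype.card K ^ finrank K V - Fintype.card K ^ (i : ℕ)) := by
  have hvec : {v : Fin (n + 2) → {v : V // v ≠ 0} // IsCircuit fun i => mk K (v i).1 (v i).2} ≃
      {v : Fin (n + 2) → V // IsLinearCircuit K v} :=
    { toFun := fun v => ⟨fun i => (v.1 i).1, (isCircuit_mk_iff _).1 v.2⟩
      invFun := fun v => ⟨fun i => ⟨v.1 i, v.2.ne_zero i⟩, (isCircuit_mk_iff _).2 v.2⟩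
      left_inv := fun _ => rfl
      right_inv := fun _ => rfl }
  have hcard := (card_subtype_comp_mk (K := K) (V := V) IsCircuit).symm.trans
    ((Nat.card_congr hvec).trans (card_isLinearCircuit hn))
  have hq : 0 < Fintype.card K - 1 := Nat.sub_pos_of_lt Fintype.one_lt_card
  rw [Nat.card_eq_fintype_card (α := K), Fintype.card_fin, pow_succ', ← mul_assoc] at hcard
  exact Nat.eq_of_mul_eq_mul_right (pow_pos hq _) hcard

theorem exists_finrank_eq_forall_rep_mem_iff [FiniteDimensional K V] {ι : Type*} [Fintype ι]
    {f : ι → ℙ K V} {k : ℕ} (hι : Fintype.card ι = k + 1) (hk : k ≤ finrank K V) :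
    (∃ W : Submodule K V, finrank K W = k ∧ ∀ i, (f i).rep ∈ W) ↔ Dependent f := by
  set U := span K (Set.range (Projectivization.rep ∘ f))
  have hspan : ∀ W : Submodule K V, (∀ i, (f i).rep ∈ W) ↔ U ≤ W := by
    simp [U, span_le, Set.range_subset_iff]
  have hU : finrank K U ≤ k + 1 := hι ▸ finrank_range_le_card _
  rw [dependent_iff, linearIndependent_iff_card_eq_finrank_span, hι]
  change _ ↔ k + 1 ≠ finrank K U
  constructor
  · rintro ⟨W, hW, hfW⟩
    have := finrank_mono ((hspan W).1 hfW)
    omega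
  · intro hne
    obtain ⟨W, hUW, hW⟩ := U.exists_le_finrank_eq (by omega) hk
    exact ⟨W, hW, (hspan W).2 hUW⟩

end Projectivization

end LinearAlgebra

def IsQuadrangle {F : Type*} [Field F] (s : Finset (PG3 F)) : Prop :=
  s.card = 4 ∧ Coplanar' F s ∧ ∀ t ⊆ s, t.card = 3 → ¬ Collinear' F t

section PG3

variable {F : Type*} [Field F]

theorem coplanar'_image_iff [DecidableEq (PG3 F)] (f : Fin 4 → PG3 F) :
    Coplanar' F (univ.image f) ↔ Dependent f := by
  simp only [Coplanar', forall_mem_image, mem_univ, true_imp_iff]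
  exact exists_finrank_eq_forall_rep_mem_iff (by simp) (by simp)

theorem collinear'_image_iff [DecidableEq (PG3 F)] (f : Fin 3 → PG3 F) :
    Collinear' F (univ.image f) ↔ Dependent f := by
  simp only [Collinear', forall_mem_image, mem_univ, true_imp_iff]
  exact exists_finrank_eq_forall_rep_mem_iff (by simp) (by simp)

theorem isCircuit_iff_isQuadrangle (f : Fin 4 ↪ PG3 F) :
    IsCircuit f ↔ IsQuadrangle (univ.map f) := by
  classical
  rw [map_eq_image, IsQuadrangle, card_image_of_injective _ f.injective, coplanar'_image_iff,
    IsCircuit]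
  simp only [card_univ, Fintype.card_fin, true_and]
  refine and_congr_right' ⟨fun hind t ht ht3 => ?_, fun hcol i => ?_⟩
  · obtain ⟨a, ha, hta⟩ := exists_eq_insert_iff.2
      ⟨ht, by rw [ht3, card_image_of_injective _ f.injective, card_univ, Fintype.card_fin]⟩
    obtain ⟨i, -, rfl⟩ := mem_image.1 (hta ▸ mem_insert_self a t)
    have ht_eq : t = univ.image (i.removeNth f) := by
      rw [image_removeNth f.injective, ← hta, erase_insert ha]
    rw [ht_eq, collinear'_image_iff, dependent_iff_not_independent, not_not]
    exact hind i
  · rw [independent_iff_not_dependent, ← collinear'_image_iff, image_removeNth f.injective]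
    refine hcol _ (erase_subset _ _) ?_
    rw [card_erase_of_mem (mem_image_of_mem _ (mem_univ _)), card_image_of_injective _ f.injective]
    simp

theorem card_isCircuit_eq_factorial_mul_card_isQuadrangle [Finite F] :
    Nat.card {f : Fin 4 → PG3 F // IsCircuit f} =
      4 ! * Nat.card {s // IsQuadrangle (F := F) s} := by
  rw [← card_finEmbedding_map_eq_factorial_mul _ fun s hs => hs.1]
  exact Nat.card_congr
    { toFun := fun f => ⟨⟨f.1, f.2.injective⟩, (isCircuit_iff_isQuadrangle _).1 f.2⟩
      invFun := fun f => ⟨f.1, (isCircuit_iff_isQuadrangle f.1).2 f.2⟩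
      left_inv := fun _ => rfl
      right_inv := fun _ => rfl }

end PG3

theorem stmt9 (F : Type*) [Field F] [Fintype F] (q : ℕ) (hq : Fintype.card F = q) :
    24 * Nat.card {s : Finset (PG3 F) // s.card = 4 ∧ Coplanar' F s ∧
        ∀ t ⊆ s, t.card = 3 → ¬ Collinear' F t} =
      q ^ 3 * (q ^ 4 - 1) * (q ^ 3 - 1) * (q + 1) := by
  change 4 ! * Nat.card {s // IsQuadrangle s} = _
  have hcount := card_isCircuit_mul (K := F) (V := Fin 4 → F) (n := 2) (by simp)
  rw [card_isCircuit_eq_factorial_mul_card_isQuadrangle, finrank_fin_fun, hq,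
    Fin.prod_univ_three] at hcount
  simp only [Fin.val_zero, Fin.val_one, Fin.val_two, pow_zero, pow_one] at hcount
  have hq1 : 1 ≤ q := hq ▸ Fintype.card_pos
  have hprod : (q ^ 4 - 1) * (q ^ 4 - q) * (q ^ 4 - q ^ 2) =
      q ^ 3 * (q ^ 4 - 1) * (q ^ 3 - 1) * (q + 1) * (q - 1) := by
    have h2 : q ≤ q ^ 2 := Nat.le_self_pow two_ne_zero q
    have h3 : q ^ 2 ≤ q ^ 4 := Nat.pow_le_pow_right hq1 (by norm_num)
    have h4 : 1 ≤ q ^ 3 := Nat.one_le_pow _ _ hq1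
    zify [hq1, h2.trans h3, h3, h4, h4.trans (Nat.pow_le_pow_right hq1 (by norm_num : 3 ≤ 4))]
    ring
  have hq2 : 0 < q - 1 := Nat.sub_pos_of_lt (hq ▸ Fintype.one_lt_card)
  exact Nat.eq_of_mul_eq_mul_right hq2 (hcount.trans hprod)
end
end

section
/- The number of unordered pairs of skew (disjoint) lines in PG(3,q) equals (1+q²)(1+q+q²) · q⁴ / 2. In particular, for q = 3 this number is 5265. -/
/-!
A line of `PG(3, q)` is a 2-dimensional subspace `W ≤ F⁴`, and two lines are skew exactly when
their subspaces meet in `0`. Splitting an ordered basis of `F⁴` into its first and last two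
vectors gives a pair of such subspaces, and each pair arises from `|GL₂(q)|²` bases. Hence there
are `|GL₄(q)| / |GL₂(q)|² = (1 + q²)(1 + q + q²) q⁴` ordered pairs of skew lines, and half as
many unordered ones.
-/

noncomputable section

/-- A line of `PG(3,F)`: the set of points of a 2-dimensional linear subspace. -/
def IsLine (F : Type*) [Field F] (L : Set (PG3 F)) : Prop :=
  ∃ W : Submodule F (Fin 4 → F), Module.finrank F W = 2 ∧ L = {p : PG3 F | p.rep ∈ W}

open Module Submodule Set
open scoped LinearAlgebra.Projectivization

theorem two_mul_card_unordered_pairs {α : Type*} [Finite α] {r : α → α → Prop}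
    (hsymm : ∀ a b, r a b → r b a) (hirrefl : ∀ a, ¬ r a a) :
    2 * Nat.card {s : Set α // ∃ a b, r a b ∧ s = {a, b}} = Nat.card {p : α × α // r p.1 p.2} := by
  classical
  have := Fintype.ofFinite α
  let G : SimpleGraph α := ⟨r, ⟨hsymm⟩, ⟨hirrefl⟩⟩
  let darts : G.Dart ≃ {p : α × α // r p.1 p.2} :=
    { toFun := fun d => ⟨d.toProd, d.adj⟩
      invFun := fun p => ⟨p.1, p.2⟩
      left_inv := fun _ => rfl
      right_inv := fun _ => rfl }
  have edge_toSet : ∀ e ∈ G.edgeSet, ∃ a b, r a b ∧ {x | x ∈ e} = {a, b} := by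
    intro e he
    induction e using Sym2.ind with
    | h a b => exact ⟨a, b, he, by ext; simp⟩
  let edges : G.edgeSet ≃ {s : Set α // ∃ a b, r a b ∧ s = {a, b}} :=
    Equiv.ofBijective (fun e => ⟨{x | x ∈ e.1}, edge_toSet e.1 e.2⟩)
      ⟨fun e e' h => Subtype.ext (Sym2.ext fun x => Set.ext_iff.1 (congrArg Subtype.val h) x), by
        rintro ⟨_, a, b, hab, rfl⟩
        exact ⟨⟨s(a, b), hab⟩, by ext; simp⟩⟩
  rw [← Nat.card_congr edges, ← Nat.card_congr darts, Nat.card_eq_fintype_card (α := G.Dart),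
    G.dart_card_eq_twice_card_edges, SimpleGraph.edgeFinset, Set.toFinset_card,
    Nat.card_eq_fintype_card]

instance Submodule.finite_of_finite {R M : Type*} [Semiring R] [AddCommMonoid M] [Module R M]
    [Finite M] : Finite (Submodule R M) :=
  Finite.of_injective _ SetLike.coe_injective

section Projectivization

variable {K V : Type*} [Field K] [AddCommGroup V] [Module K V]

theorem Submodule.mem_projectivization_iff_rep_mem (W : Submodule K V) (p : ℙ K V) :
    p ∈ W.projectivization ↔ p.rep ∈ W := by
  conv_lhs => rw [← p.mk_rep]
  exact W.mk_mem_projectivization_iff p.rep_nonzero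

theorem Submodule.coe_projectivization (W : Submodule K V) :
    (W.projectivization : Set (ℙ K V)) = {p | p.rep ∈ W} :=
  Set.ext W.mem_projectivization_iff_rep_mem

theorem Submodule.coe_projectivization_injective :
    Function.Injective fun W : Submodule K V => (W.projectivization : Set (ℙ K V)) :=
  SetLike.coe_injective.comp projectivization.injective

theorem Submodule.coe_projectivization_inter_eq_empty_iff {W₁ W₂ : Submodule K V} :
    (W₁.projectivization : Set (ℙ K V)) ∩ W₂.projectivization = ∅ ↔ Disjoint W₁ W₂ := by
  simp only [Set.eq_empty_iff_forall_notMem, Set.mem_inter_iff, SetLike.mem_coe,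
    Submodule.disjoint_def]
  refine ⟨fun h v h₁ h₂ => by_contra fun hv => h (.mk K v hv) ⟨h₁, h₂⟩, fun h p hp => ?_⟩
  simp only [mem_projectivization_iff_rep_mem] at hp
  exact p.rep_nonzero (h _ hp.1 hp.2)

end Projectivization

section Counting

variable {K V : Type*} [Field K] [Fintype K] [AddCommGroup V] [Module K V] [Finite V]

local notation "q" => Fintype.card K

theorem card_linearIndependent_span_eq (W : Submodule K V) {k : ℕ} (hW : finrank K W = k) :
    Nat.card {s : Fin k → V // LinearIndependent K s ∧ span K (range s) = W} =
      ∏ i : Fin k, (q ^ k - q ^ (i : ℕ)) := by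
  let e : {s : Fin k → V // LinearIndependent K s ∧ span K (range s) = W} ≃
      {t : Fin k → W // LinearIndependent K t} :=
    { toFun := fun s => ⟨fun i => ⟨s.1 i, s.2.2.le (subset_span (mem_range_self i))⟩,
        LinearIndependent.of_comp W.subtype s.2.1⟩
      invFun := fun t => ⟨W.subtype ∘ t.1, t.2.map' _ W.ker_subtype,
        eq_of_le_of_finrank_eq (span_le.2 (range_subset_iff.2 fun i => (t.1 i).2))
          (by rw [finrank_span_eq_card (t.2.map' _ W.ker_subtype), hW, Fintype.card_fin])⟩
      left_inv := fun _ => rfl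
      right_inv := fun _ => rfl }
  rw [Nat.card_congr e, card_linearIndependent hW.ge, hW]

theorem card_disjoint_pairs_mul {k l : ℕ} (hkl : k + l ≤ finrank K V) :
    Nat.card {p : Submodule K V × Submodule K V //
        finrank K p.1 = k ∧ finrank K p.2 = l ∧ Disjoint p.1 p.2} *
      ((∏ i : Fin k, (q ^ k - q ^ (i : ℕ))) * ∏ i : Fin l, (q ^ l - q ^ (i : ℕ))) =
    ∏ i : Fin (k + l), (q ^ finrank K V - q ^ (i : ℕ)) := by
  set P := {p : Submodule K V × Submodule K V //
    finrank K p.1 = k ∧ finrank K p.2 = l ∧ Disjoint p.1 p.2}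
  have := Fintype.ofFinite P
  let splitFamily : {s : Fin (k + l) → V // LinearIndependent K s} ≃
      {uv : (Fin k → V) × (Fin l → V) // LinearIndependent K uv.1 ∧ LinearIndependent K uv.2 ∧
        Disjoint (span K (range uv.1)) (span K (range uv.2))} :=
    ((finSumFinEquiv.arrowCongr (Equiv.refl V)).symm.trans
      (Equiv.sumArrowEquivProdArrow _ _ _)).subtypeEquiv fun s => by
        rw [← linearIndependent_equiv finSumFinEquiv]; exact linearIndependent_sum
  let spanFibers : {uv : (Fin k → V) × (Fin l → V) // LinearIndependent K uv.1 ∧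
        LinearIndependent K uv.2 ∧ Disjoint (span K (range uv.1)) (span K (range uv.2))} ≃
      Σ p : P, {u : Fin k → V // LinearIndependent K u ∧ span K (range u) = p.1.1} ×
        {v : Fin l → V // LinearIndependent K v ∧ span K (range v) = p.1.2} :=
    { toFun := fun uv => ⟨⟨(span K (range uv.1.1), span K (range uv.1.2)),
          by simpa using finrank_span_eq_card uv.2.1,
          by simpa using finrank_span_eq_card uv.2.2.1, uv.2.2.2⟩,
        ⟨uv.1.1, uv.2.1, rfl⟩, ⟨uv.1.2, uv.2.2.1, rfl⟩⟩
      invFun := fun x => ⟨(x.2.1.1, x.2.2.1), x.2.1.2.1, x.2.2.2.1, by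
        rw [x.2.1.2.2, x.2.2.2.2]; exact x.1.2.2.2⟩
      left_inv := fun _ => rfl
      right_inv := by
        rintro ⟨⟨⟨W₁, W₂⟩, h⟩, ⟨u, hu, hu'⟩, ⟨v, hv, hv'⟩⟩
        dsimp only at hu' hv'
        subst hu' hv'
        rfl }
  rw [← card_linearIndependent hkl, Nat.card_congr (splitFamily.trans spanFibers),
    Nat.card_sigma]
  simp only [Nat.card_prod]
  rw [Finset.sum_congr rfl fun p _ => by
    rw [card_linearIndependent_span_eq _ p.2.1, card_linearIndependent_span_eq _ p.2.2.1]]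
  rw [Finset.sum_const, Finset.card_univ, smul_eq_mul, Nat.card_eq_fintype_card]

theorem card_disjoint_planes_of_finrank_eq_four (hV : finrank K V = 4) :
    Nat.card {p : Submodule K V × Submodule K V //
        finrank K p.1 = 2 ∧ finrank K p.2 = 2 ∧ Disjoint p.1 p.2} =
      (1 + q ^ 2) * (1 + q + q ^ 2) * q ^ 4 := by
  have h := card_disjoint_pairs_mul (K := K) (V := V) (k := 2) (l := 2) (by omega)
  simp only [hV, Fin.prod_univ_succ, Fin.prod_univ_zero, Fin.val_zero, Fin.val_succ,
    zero_add, Nat.reduceAdd, pow_zero, pow_one, mul_one] at h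
  have hq : 1 < q := Fintype.one_lt_card
  have hpos : 0 < (q ^ 2 - 1) * (q ^ 2 - q) * ((q ^ 2 - 1) * (q ^ 2 - q)) := by
    have : q < q ^ 2 := lt_self_pow₀ hq one_lt_two
    have : 0 < (q ^ 2 - 1) * (q ^ 2 - q) := Nat.mul_pos (by omega) (by omega)
    positivity
  refine Nat.eq_of_mul_eq_mul_right hpos (h.trans ?_)
  zify [Nat.one_le_pow 2 q hq.le, Nat.le_self_pow two_ne_zero q, Nat.one_le_pow 4 q hq.le,
    Nat.le_self_pow four_ne_zero q, Nat.pow_le_pow_right hq.le (by norm_num : 2 ≤ 4),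
    Nat.pow_le_pow_right hq.le (by norm_num : 3 ≤ 4)]
  ring

end Counting

section SkewLines

variable {F : Type*} [Field F]

theorem IsLine.inter_self_ne_empty {L : Set (PG3 F)} (hL : IsLine F L) : L ∩ L ≠ ∅ := by
  obtain ⟨W, hW, rfl⟩ := hL
  rw [← coe_projectivization, Ne, coe_projectivization_inter_eq_empty_iff, disjoint_self]
  rintro rfl
  simp at hW

theorem card_skew_line_pairs :
    Nat.card {p : Set (PG3 F) × Set (PG3 F) // IsLine F p.1 ∧ IsLine F p.2 ∧ p.1 ∩ p.2 = ∅} =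
      Nat.card {p : Submodule F (Fin 4 → F) × Submodule F (Fin 4 → F) //
        finrank F p.1 = 2 ∧ finrank F p.2 = 2 ∧ Disjoint p.1 p.2} := by
  refine (Nat.card_congr (Equiv.ofBijective
    (fun p => ⟨((p.1.1.projectivization : Set (PG3 F)), p.1.2.projectivization),
      ⟨p.1.1, p.2.1, coe_projectivization _⟩, ⟨p.1.2, p.2.2.1, coe_projectivization _⟩,
      coe_projectivization_inter_eq_empty_iff.2 p.2.2.2⟩) ⟨fun p p' h => ?_, ?_⟩)).symm
  · simp only [Subtype.mk.injEq, Prod.mk.injEq] at h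
    exact Subtype.ext (Prod.ext (coe_projectivization_injective h.1)
      (coe_projectivization_injective h.2))
  · rintro ⟨⟨L₁, L₂⟩, ⟨W₁, h₁, hL₁⟩, ⟨W₂, h₂, hL₂⟩, hskew⟩
    dsimp only at hL₁ hL₂ hskew
    subst hL₁ hL₂
    rw [← coe_projectivization, ← coe_projectivization,
      coe_projectivization_inter_eq_empty_iff] at hskew
    exact ⟨⟨(W₁, W₂), h₁, h₂, hskew⟩, by simp only [coe_projectivization]⟩

end SkewLines

theorem stmt12 (F : Type*) [Field F] [Fintype F] (q : ℕ) (hq : Fintype.card F = q) :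
    2 * Nat.card {s : Set (Set (PG3 F)) // ∃ L₁ L₂ : Set (PG3 F),
        IsLine F L₁ ∧ IsLine F L₂ ∧ L₁ ∩ L₂ = ∅ ∧ s = {L₁, L₂}} =
      (1 + q ^ 2) * (1 + q + q ^ 2) * q ^ 4 ∧
    (q = 3 → Nat.card {s : Set (Set (PG3 F)) // ∃ L₁ L₂ : Set (PG3 F),
        IsLine F L₁ ∧ IsLine F L₂ ∧ L₁ ∩ L₂ = ∅ ∧ s = {L₁, L₂}} = 5265) := by
  subst hq
  have hpairs := two_mul_card_unordered_pairs
    (r := fun L₁ L₂ : Set (PG3 F) => IsLine F L₁ ∧ IsLine F L₂ ∧ L₁ ∩ L₂ = ∅)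
    (fun _ _ h => ⟨h.2.1, h.1, Set.inter_comm _ _ ▸ h.2.2⟩)
    (fun _ h => h.1.inter_self_ne_empty h.2.2)
  simp only [and_assoc] at hpairs
  rw [card_skew_line_pairs, card_disjoint_planes_of_finrank_eq_four (finrank_fin_fun F)] at hpairs
  refine ⟨hpairs, fun h3 => ?_⟩
  rw [h3] at hpairs
  omega
end
end
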